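/- Let T̄ be a complete binary tree, s an internal vertex whose left child t is internal, with A the left subtree of t, B the right subtree of t, and C the right subtree of s, and let T̄' be obtained from T̄ by the right rotation at s. Writing the external-edge sequence of T̄ as c(T̄) = v₁ c(A) / c(C) v₂ for some words v₁, v₂ over {\\, /}, we have: if B contains more than one vertex then c(T̄') = c(T̄), and if B is a single (external) vertex then c(T̄') = v₁ c(A) \\ c(C) v₂. -/
import Mathlib


/-- Complete binary trees: every vertex has 0 or 2 children
(`leaf` = external vertex, `node` = internal vertex). -/
inductive CTree where
  | leaf : CTree
  | node : CTree → CTree → CTree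
deriving DecidableEq

/-- The number of internal vertices of a complete binary tree. -/
def isize : CTree → ℕ
  | .leaf => 0
  | .node l r => isize l + isize r + 1

/-- The sequence of external edges of a complete binary tree, recorded walking clockwise
around it starting at the root: `false` = left external edge (`\`), `true` = right
external edge (`/`). -/
def extSeq : CTree → List Bool
  | .leaf => []
  | .node l r =>
      (if l = CTree.leaf then [false] else extSeq l) ++
      (if r = CTree.leaf then [true] else extSeq r)

/-- The word `c(T̄)` over `{\, /}`: the external edges of `T̄` in clockwise order,
omitting the first and the last ones (`false` = `\`, `true` = `/`). -/
def cword (t : CTree) : List Bool := ((extSeq t).drop 1).dropLast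

/-- One-hole contexts, locating a vertex in a complete binary tree. -/
inductive Ctx where
  | hole : Ctx
  | left : Ctx → CTree → Ctx
  | right : CTree → Ctx → Ctx

/-- Fill the hole of a context with a tree. -/
def Ctx.fill : Ctx → CTree → CTree
  | .hole, t => t
  | .left c r, t => CTree.node (c.fill t) r
  | .right l c, t => CTree.node l (c.fill t)

/-- Right rotation at some internal vertex `s` whose left child `t` is internal, with
`A`, `B` the left and right subtrees of `t` and `C` the right subtree of `s`: after the
rotation, `t` becomes the right child of `s`, `A` the left subtree of `s`, and `B`, `C`
the left and right subtrees of `t`. -/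
def RotStep (T T' : CTree) : Prop :=
  ∃ (K : Ctx) (A B C : CTree),
    T = K.fill (CTree.node (CTree.node A B) C) ∧
    T' = K.fill (CTree.node A (CTree.node B C))

/-- The Tamari order on complete binary trees: the reflexive-transitive closure of the
right-rotation covering relation. -/
def TamariLe : CTree → CTree → Prop := Relation.ReflTransGen RotStep

/-- The external edges contributed by a subtree sitting in a left-child position. -/
def eL (X : CTree) : List Bool := if X = CTree.leaf then [false] else extSeq X

/-- The external edges contributed by a subtree sitting in a right-child position. -/
def eR (X : CTree) : List Bool := if X = CTree.leaf then [true] else extSeq X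


lemma fill_ne_leaf (K : Ctx) (X : CTree) (hX : X ≠ CTree.leaf) :
    K.fill X ≠ CTree.leaf := by
  cases K <;> simp [Ctx.fill] <;> exact hX

lemma ctx_ext (K : Ctx) :
    ∃ v₁ v₂ : List Bool, ∀ X : CTree, X ≠ CTree.leaf →
      extSeq (K.fill X) = v₁ ++ extSeq X ++ v₂ := by
  induction K with
  | hole => exact ⟨[], [], fun X _ => by simp [Ctx.fill]⟩
  | left c r ih =>
      obtain ⟨v₁, v₂, h⟩ := ih
      refine ⟨v₁, v₂ ++ eR r, fun X hX => ?_⟩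
      have hne := fill_ne_leaf c X hX
      simp [Ctx.fill, extSeq, hne, h X hX, eR, List.append_assoc]
  | right l c ih =>
      obtain ⟨v₁, v₂, h⟩ := ih
      refine ⟨eL l ++ v₁, v₂, fun X hX => ?_⟩
      have hne := fill_ne_leaf c X hX
      simp [Ctx.fill, extSeq, hne, h X hX, eL, List.append_assoc]

/-- **Lemma 7.** Let `T̄ = K[node (node A B) C]` and let `T̄' = K[node A (node B C)]` be
obtained from `T̄` by the right rotation at that vertex.  If `B` has more than one vertex
then `c(T̄') = c(T̄)`; and if `B` is a single (external) vertex, then writing the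
external-edge sequence of `T̄` as `v₁ ⬝ c(A) ⬝ / ⬝ c(C) ⬝ v₂`, that of `T̄'` is
`v₁ ⬝ c(A) ⬝ \ ⬝ c(C) ⬝ v₂`. -/
theorem canopy_rotation (K : Ctx) (A B C : CTree) :
    (B ≠ CTree.leaf →
      cword (K.fill (CTree.node (CTree.node A B) C)) =
        cword (K.fill (CTree.node A (CTree.node B C)))) ∧
    (B = CTree.leaf →
      ∃ v₁ v₂ : List Bool,
        extSeq (K.fill (CTree.node (CTree.node A B) C)) =
          v₁ ++ eL A ++ [true] ++ eR C ++ v₂ ∧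
        extSeq (K.fill (CTree.node A (CTree.node B C))) =
          v₁ ++ eL A ++ [false] ++ eR C ++ v₂) := by
  obtain ⟨v₁, v₂, h⟩ := ctx_ext K
  constructor
  · intro hB
    have e1 : extSeq (CTree.node (CTree.node A B) C) =
        extSeq (CTree.node A (CTree.node B C)) := by
      simp [extSeq, hB, List.append_assoc]
    rw [cword, cword, h _ (by simp), h _ (by simp), e1]
  · intro hB
    subst hB
    refine ⟨v₁, v₂, ?_, ?_⟩
    · rw [h _ (by simp)]
      simp [extSeq, eL, eR, List.append_assoc]
    · rw [h _ (by simp)]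
      simp [extSeq, eL, eR, List.append_assoc]
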